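/- arXiv:math/0007066 — 2 statements merged into one kernel-verified Lean document; each statement's English description precedes it below -/
import Mathlib

section
/- No compatible almost Hermitian structure J on 𝔤₃ has totally skew-symmetric Nijenhuis trilinear form: there is no such J for which (X,Y,Z) ↦ ⟨N(X,Y),Z⟩ is alternating (i.e. the Gray–Hervella class 𝒵₁₃₄ = {W₂ = 0} is empty). In particular, no compatible J on (𝔤₃, g) is integrable: the 3-step nilmanifold M₃ admits no invariant Hermitian structure compatible with the standard metric. -/
noncomputable section

/-- The standard inner product on `ℝ⁶ = Fin 6 → ℝ`. -/
def ip (x y : Fin 6 → ℝ) : ℝ := ∑ i, x i * y i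

/-- The standard basis vectors `e₁, …, e₆` (0-indexed). -/
def E (i : Fin 6) : Fin 6 → ℝ := fun j => if j = i then 1 else 0

/-- The 2-form `e^{i+1,j+1} = e^{i+1} ∧ e^{j+1}` (0-indexed coordinates). -/
def ew (i j : Fin 6) (X Y : Fin 6 → ℝ) : ℝ := X i * Y j - X j * Y i

/-- The wedge of the 1-forms dual (via `ip`) to the vectors `u`, `w`. -/
def w11 (u w : Fin 6 → ℝ) (X Y : Fin 6 → ℝ) : ℝ := ip u X * ip w Y - ip u Y * ip w X

/-- The wedge `σ ∧ α` of a 2-form with a 1-form. -/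
def w21 (σ : (Fin 6 → ℝ) → (Fin 6 → ℝ) → ℝ) (α : (Fin 6 → ℝ) → ℝ)
    (X Y Z : Fin 6 → ℝ) : ℝ := σ X Y * α Z - σ X Z * α Y + σ Y Z * α X

/-- The wedge `σ ∧ τ` of two 2-forms, a 4-form. -/
def w22 (σ τ : (Fin 6 → ℝ) → (Fin 6 → ℝ) → ℝ) (v : Fin 4 → (Fin 6 → ℝ)) : ℝ :=
  (1/4) * ∑ π : Equiv.Perm (Fin 4), ((Equiv.Perm.sign π : ℤ) : ℝ) *
    (σ (v (π 0)) (v (π 1)) * τ (v (π 2)) (v (π 3)))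

/-- The wedge `σ ∧ τ ∧ ρ` of three 2-forms, a 6-form. -/
def w222 (σ τ ρ : (Fin 6 → ℝ) → (Fin 6 → ℝ) → ℝ) (v : Fin 6 → (Fin 6 → ℝ)) : ℝ :=
  (1/8) * ∑ π : Equiv.Perm (Fin 6), ((Equiv.Perm.sign π : ℤ) : ℝ) *
    (σ (v (π 0)) (v (π 1)) * τ (v (π 2)) (v (π 3)) * ρ (v (π 4)) (v (π 5)))

/-- The wedge `σ ∧ τ` of a 3-form and a 2-form, a 5-form. -/
def w32 (σ : (Fin 6 → ℝ) → (Fin 6 → ℝ) → (Fin 6 → ℝ) → ℝ)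
    (τ : (Fin 6 → ℝ) → (Fin 6 → ℝ) → ℝ) (v : Fin 5 → (Fin 6 → ℝ)) : ℝ :=
  (1/12) * ∑ π : Equiv.Perm (Fin 5), ((Equiv.Perm.sign π : ℤ) : ℝ) *
    (σ (v (π 0)) (v (π 1)) (v (π 2)) * τ (v (π 3)) (v (π 4)))

/-- The wedge of the four 1-forms dual to the vectors `f 0, f 1, f 2, f 3`. -/
def w1111 (f : Fin 4 → (Fin 6 → ℝ)) (v : Fin 4 → (Fin 6 → ℝ)) : ℝ :=
  ∑ π : Equiv.Perm (Fin 4), ((Equiv.Perm.sign π : ℤ) : ℝ) * ∏ i, ip (f i) (v (π i))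

/-- The standard volume 6-form `e^{123456}`. -/
def vol (v : Fin 6 → (Fin 6 → ℝ)) : ℝ := Matrix.det (Matrix.of fun i j => v j i)

/-- The 4-form `e^{1234}`. -/
def e1234 (v : Fin 4 → (Fin 6 → ℝ)) : ℝ :=
  Matrix.det (Matrix.of fun i j : Fin 4 => v j (Fin.castLE (by norm_num) i))

/-- `J` is a linear map. -/
def IsLin (J : (Fin 6 → ℝ) → (Fin 6 → ℝ)) : Prop :=
  (∀ x y, J (x + y) = J x + J y) ∧ (∀ (c : ℝ) (x), J (c • x) = c • J x)

/-- `J` is a compatible almost Hermitian structure: an orthogonal linear complex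
structure whose fundamental 2-form `ω(X,Y) = ⟨JX,Y⟩` satisfies `ω∧ω∧ω = 6·e^{123456}`. -/
def Compatible (J : (Fin 6 → ℝ) → (Fin 6 → ℝ)) : Prop :=
  IsLin J ∧ (∀ x, J (J x) = -x) ∧ (∀ x y, ip (J x) (J y) = ip x y) ∧
    (∀ v, w222 (fun X Y => ip (J X) Y) (fun X Y => ip (J X) Y) (fun X Y => ip (J X) Y) v
      = 6 * vol v)

/-- The Chevalley–Eilenberg differential of a 2-form, for the bracket `b`. -/
def dd (b : (Fin 6 → ℝ) → (Fin 6 → ℝ) → (Fin 6 → ℝ))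
    (ω : (Fin 6 → ℝ) → (Fin 6 → ℝ) → ℝ) (X Y Z : Fin 6 → ℝ) : ℝ :=
  -ω (b X Y) Z + ω (b X Z) Y - ω (b Y Z) X

/-- The Nijenhuis tensor of `J`, for the bracket `b`. -/
def nij (b : (Fin 6 → ℝ) → (Fin 6 → ℝ) → (Fin 6 → ℝ))
    (J : (Fin 6 → ℝ) → (Fin 6 → ℝ)) (X Y : Fin 6 → ℝ) : Fin 6 → ℝ :=
  b (J X) (J Y) - b X Y - J (b (J X) Y) - J (b X (J Y))

/-- The Chevalley–Eilenberg differential of a 4-form, for the bracket `b`. -/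
def dd4 (b : (Fin 6 → ℝ) → (Fin 6 → ℝ) → (Fin 6 → ℝ))
    (F : (Fin 4 → (Fin 6 → ℝ)) → ℝ) (v : Fin 5 → (Fin 6 → ℝ)) : ℝ :=
  ∑ i : Fin 5, ∑ j : Fin 5,
    if h : i < j then
      ((-1 : ℝ)) ^ (i.val + j.val) * F (Fin.cons (b (v i) (v j))
        (fun m : Fin 3 => v (j.succAbove
          ((⟨i.val, by have h1 : i.val < j.val := h; have h2 : j.val < 5 := j.isLt; omega⟩ :
            Fin 4).succAbove m))))
    else 0

/-- The Lie bracket of the real Lie algebra `𝔤_H` of the complex Heisenberg group: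
`[e₁,e₃] = −e₅`, `[e₂,e₄] = e₅`, `[e₁,e₄] = −e₆`, `[e₂,e₃] = −e₆`. -/
def bH (x y : Fin 6 → ℝ) : Fin 6 → ℝ := fun k =>
  if k = 4 then -(x 0 * y 2 - x 2 * y 0) + (x 1 * y 3 - x 3 * y 1)
  else if k = 5 then -(x 0 * y 3 - x 3 * y 0) - (x 1 * y 2 - x 2 * y 1)
  else 0

/-- The Lie bracket of `𝔤₂`: `[e₁,e₂] = −e₅`, `[e₁,e₄] = −e₆`, `[e₂,e₃] = −e₆`. -/
def b2 (x y : Fin 6 → ℝ) : Fin 6 → ℝ := fun k =>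
  if k = 4 then -(x 0 * y 1 - x 1 * y 0)
  else if k = 5 then -(x 0 * y 3 - x 3 * y 0) - (x 1 * y 2 - x 2 * y 1)
  else 0

/-- The Lie bracket of the 3-step algebra `𝔤₃`: `[e₁,e₂] = −e₅`, `[e₁,e₅] = −e₆`,
`[e₃,e₄] = −e₆`. -/
def b3 (x y : Fin 6 → ℝ) : Fin 6 → ℝ := fun k =>
  if k = 4 then -(x 0 * y 1 - x 1 * y 0)
  else if k = 5 then -(x 0 * y 4 - x 4 * y 0) - (x 2 * y 3 - x 3 * y 2)
  else 0

/-- Membership in the 3-sphere `𝒮` of 2-forms `e⁵∧f¹ + f²∧e⁶ + f³∧f⁴`,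
where `(f¹,f²,f³,f⁴)` is an orthonormal basis of `𝔻 = span(e¹,e²,e³,e⁴)` with
`f¹∧f²∧f³∧f⁴ = e^{1234}` and `f¹∧f² + f³∧f⁴ = e^{12} + e^{34}`. -/
def memS (ω : (Fin 6 → ℝ) → (Fin 6 → ℝ) → ℝ) : Prop :=
  ∃ f : Fin 4 → (Fin 6 → ℝ),
    (∀ i, f i 4 = 0 ∧ f i 5 = 0) ∧
    (∀ i j, ip (f i) (f j) = if i = j then 1 else 0) ∧
    (∀ v, w1111 f v = e1234 v) ∧
    (∀ X Y, w11 (f 0) (f 1) X Y + w11 (f 2) (f 3) X Y = ew 0 1 X Y + ew 2 3 X Y) ∧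
    (∀ X Y, ω X Y = w11 (E 4) (f 0) X Y + w11 (f 1) (E 5) X Y + w11 (f 2) (f 3) X Y)

/-!
The bracket of `𝔤₃` is `[X,Y] = -e^{12}(X,Y) e₅ - (e^{15}+e^{34})(X,Y) e₆`, so `N` takes values
in `span(e₅, Je₅, e₆, Je₆)`. If `⟨N(X,Y),Z⟩` is alternating, then `|N(X,Y)|²` is a combination
of the values `⟨N(v,X),Y⟩` with `v ∈ {e₅, Je₅, e₆, Je₆}`; together with `N(JX,Y) = -J N(X,Y)`
this propagates `N(e₅,e₆) = 0` first to `N(e₅,·) = N(e₆,·) = 0` and then to `N = 0`.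

An integrable `J` gives `[JX, Je₆] = J[X, Je₆]` for all `X`, because `e₆` is central. Let
`t = ⟨Je₅, e₆⟩`. If `t² ≠ 1`, the plane `span(e₅, e₆)` contains no nonzero `w` with `Jw` in it,
so `Je₆` is central, i.e. a multiple of `e₆`, which is impossible for a unit vector orthogonal to
`e₆`. If `t² = 1`, then `Je₅ = t e₆`, and `X = e₁` violates the identity.
-/

theorem ip_eq_dotProduct (x y : Fin 6 → ℝ) : ip x y = x ⬝ᵥ y := rfl

theorem E_eq_single (i : Fin 6) : E i = Pi.single i 1 := by
  ext j
  simp [E, Pi.single_apply]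

theorem ip_E (x : Fin 6 → ℝ) (i : Fin 6) : ip x (E i) = x i := by
  simp [ip_eq_dotProduct, E_eq_single, dotProduct_single]

namespace IsLin

variable {J : (Fin 6 → ℝ) → (Fin 6 → ℝ)}

def toLinearMap (hJ : IsLin J) : (Fin 6 → ℝ) →ₗ[ℝ] (Fin 6 → ℝ) where
  toFun := J
  map_add' := hJ.1
  map_smul' := hJ.2

theorem map_zero (hJ : IsLin J) : J 0 = 0 := hJ.toLinearMap.map_zero

theorem map_neg (hJ : IsLin J) (x : Fin 6 → ℝ) : J (-x) = -J x := hJ.toLinearMap.map_neg x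

theorem map_add (hJ : IsLin J) (x y : Fin 6 → ℝ) : J (x + y) = J x + J y := hJ.1 x y

theorem map_sub (hJ : IsLin J) (x y : Fin 6 → ℝ) : J (x - y) = J x - J y :=
  hJ.toLinearMap.map_sub x y

theorem map_smul (hJ : IsLin J) (c : ℝ) (x : Fin 6 → ℝ) : J (c • x) = c • J x := hJ.2 c x

end IsLin

section OrthogonalComplexStructure

variable {J : (Fin 6 → ℝ) → (Fin 6 → ℝ)}

theorem ip_apply_left (hJJ : ∀ x, J (J x) = -x) (hIP : ∀ x y, ip (J x) (J y) = ip x y)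
    (x y : Fin 6 → ℝ) : ip (J x) y = -ip x (J y) := by
  have h := hIP x (J y)
  rw [hJJ, ip_eq_dotProduct, dotProduct_neg] at h
  rw [← h, ip_eq_dotProduct, neg_neg]

theorem ip_apply_self (hJJ : ∀ x, J (J x) = -x) (hIP : ∀ x y, ip (J x) (J y) = ip x y)
    (x : Fin 6 → ℝ) : ip (J x) x = 0 := by
  have h := ip_apply_left hJJ hIP x x
  rw [ip_eq_dotProduct, ip_eq_dotProduct, dotProduct_comm x] at h
  exact self_eq_neg.1 h

end OrthogonalComplexStructure

section Nijenhuis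

variable {b : (Fin 6 → ℝ) → (Fin 6 → ℝ) → (Fin 6 → ℝ)} {J : (Fin 6 → ℝ) → (Fin 6 → ℝ)}

theorem nij_swap (hb : ∀ x y, b y x = -b x y) (hJ : IsLin J) (X Y : Fin 6 → ℝ) :
    nij b J Y X = -nij b J X Y := by
  simp only [nij]
  rw [hb (J Y) (J X), hb Y X, hb (J Y) X, hb Y (J X), hJ.map_neg, hJ.map_neg]
  abel

theorem nij_self (hb : ∀ x y, b y x = -b x y) (hJ : IsLin J) (X : Fin 6 → ℝ) :
    nij b J X X = 0 :=
  self_eq_neg.1 (nij_swap hb hJ X X)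

theorem nij_apply_left (hbneg : ∀ x y, b (-x) y = -b x y) (hJ : IsLin J)
    (hJJ : ∀ x, J (J x) = -x) (X Y : Fin 6 → ℝ) :
    nij b J (J X) Y = -J (nij b J X Y) := by
  simp only [nij, hJJ, hbneg, hJ.map_sub, hJ.map_neg]
  abel

theorem nij_apply_self_left (hb : ∀ x y, b y x = -b x y) (hbneg : ∀ x y, b (-x) y = -b x y)
    (hJ : IsLin J) (hJJ : ∀ x, J (J x) = -x) (X : Fin 6 → ℝ) : nij b J (J X) X = 0 := by
  rw [nij_apply_left hbneg hJ hJJ, nij_self hb hJ, hJ.map_zero, neg_zero]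

theorem nij_apply_self_right (hb : ∀ x y, b y x = -b x y) (hbneg : ∀ x y, b (-x) y = -b x y)
    (hJ : IsLin J) (hJJ : ∀ x, J (J x) = -x) (X : Fin 6 → ℝ) : nij b J X (J X) = 0 := by
  rw [nij_swap hb hJ (J X) X, nij_apply_self_left hb hbneg hJ hJJ, neg_zero]

theorem nij_mem_span (hJ : IsLin J) {u v : Fin 6 → ℝ}
    (hbuv : ∀ x y, ∃ s t : ℝ, b x y = s • u + t • v) (X Y : Fin 6 → ℝ) :
    ∃ a₁ a₂ a₃ a₄ : ℝ, nij b J X Y = a₁ • u + a₂ • J u + a₃ • v + a₄ • J v := by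
  obtain ⟨s₁, t₁, h₁⟩ := hbuv (J X) (J Y)
  obtain ⟨s₂, t₂, h₂⟩ := hbuv X Y
  obtain ⟨s₃, t₃, h₃⟩ := hbuv (J X) Y
  obtain ⟨s₄, t₄, h₄⟩ := hbuv X (J Y)
  refine ⟨s₁ - s₂, -s₃ - s₄, t₁ - t₂, -t₃ - t₄, ?_⟩
  simp only [nij, h₁, h₂, h₃, h₄, hJ.map_add, hJ.map_smul]
  module

end Nijenhuis

section SkewNijenhuisForm

variable {b : (Fin 6 → ℝ) → (Fin 6 → ℝ) → (Fin 6 → ℝ)} {J : (Fin 6 → ℝ) → (Fin 6 → ℝ)}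

theorem ip_nij_cyclic (hb : ∀ x y, b y x = -b x y) (hJ : IsLin J)
    (hA : ∀ X Y Z, ip (nij b J X Z) Y = -ip (nij b J X Y) Z) (X Y Z : Fin 6 → ℝ) :
    ip (nij b J X Y) Z = ip (nij b J Z X) Y := by
  rw [nij_swap hb hJ X Z, ip_eq_dotProduct (-_), neg_dotProduct, ← ip_eq_dotProduct, hA]

theorem ip_nij_left_self (hb : ∀ x y, b y x = -b x y) (hJ : IsLin J)
    (hA : ∀ X Y Z, ip (nij b J X Z) Y = -ip (nij b J X Y) Z) (X Y : Fin 6 → ℝ) :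
    ip (nij b J X Y) X = 0 := by
  rw [ip_nij_cyclic hb hJ hA, nij_self hb hJ, ip_eq_dotProduct, zero_dotProduct]

theorem ip_nij_self_eq (hb : ∀ x y, b y x = -b x y) (hJ : IsLin J)
    (hA : ∀ X Y Z, ip (nij b J X Z) Y = -ip (nij b J X Y) Z) {X Y u v : Fin 6 → ℝ}
    {a₁ a₂ a₃ a₄ : ℝ} (h : nij b J X Y = a₁ • u + a₂ • J u + a₃ • v + a₄ • J v) :
    ip (nij b J X Y) (nij b J X Y) = a₁ * ip (nij b J u X) Y + a₂ * ip (nij b J (J u) X) Y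
      + a₃ * ip (nij b J v X) Y + a₄ * ip (nij b J (J v) X) Y := by
  nth_rewrite 2 [h]
  simp only [ip_eq_dotProduct, dotProduct_add, dotProduct_smul, smul_eq_mul]
  simp only [← ip_eq_dotProduct]
  rw [ip_nij_cyclic hb hJ hA X Y u, ip_nij_cyclic hb hJ hA X Y (J u),
    ip_nij_cyclic hb hJ hA X Y v, ip_nij_cyclic hb hJ hA X Y (J v)]

theorem nij_eq_zero_of_left (hb : ∀ x y, b y x = -b x y) (hbneg : ∀ x y, b (-x) y = -b x y)
    (hJ : IsLin J) (hJJ : ∀ x, J (J x) = -x) {u v : Fin 6 → ℝ}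
    (hbuv : ∀ x y, ∃ s t : ℝ, b x y = s • u + t • v)
    (hA : ∀ X Y Z, ip (nij b J X Z) Y = -ip (nij b J X Y) Z) {X : Fin 6 → ℝ}
    (hu : nij b J u X = 0) (hv : nij b J v X = 0) (Y : Fin 6 → ℝ) : nij b J X Y = 0 := by
  obtain ⟨a₁, a₂, a₃, a₄, h⟩ := nij_mem_span hJ hbuv X Y
  have hsq := ip_nij_self_eq hb hJ hA h
  rw [nij_apply_left hbneg hJ hJJ, nij_apply_left hbneg hJ hJJ, hu, hv, hJ.map_zero, neg_zero]
    at hsq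
  simpa [ip_eq_dotProduct] using hsq

theorem nij_eq_zero_of_skew (hb : ∀ x y, b y x = -b x y) (hbneg : ∀ x y, b (-x) y = -b x y)
    (hJ : IsLin J) (hJJ : ∀ x, J (J x) = -x) {u v : Fin 6 → ℝ}
    (hbuv : ∀ x y, ∃ s t : ℝ, b x y = s • u + t • v)
    (hA : ∀ X Y Z, ip (nij b J X Z) Y = -ip (nij b J X Y) Z) (X Y : Fin 6 → ℝ) :
    nij b J X Y = 0 := by
  have huv : nij b J u v = 0 := by
    obtain ⟨a₁, a₂, a₃, a₄, h⟩ := nij_mem_span hJ hbuv u v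
    have hsq := ip_nij_self_eq hb hJ hA h
    rw [nij_self hb hJ, nij_apply_self_left hb hbneg hJ hJJ, ip_nij_left_self hb hJ hA,
      ip_nij_cyclic hb hJ hA (J v), nij_apply_self_right hb hbneg hJ hJJ] at hsq
    simpa [ip_eq_dotProduct] using hsq
  have hu : ∀ Y, nij b J u Y = 0 := nij_eq_zero_of_left hb hbneg hJ hJJ hbuv hA
    (nij_self hb hJ u) (by rw [nij_swap hb hJ u v, huv, neg_zero])
  have hv : ∀ Y, nij b J v Y = 0 :=
    nij_eq_zero_of_left hb hbneg hJ hJJ hbuv hA huv (nij_self hb hJ v)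
  exact nij_eq_zero_of_left hb hbneg hJ hJJ hbuv hA (hu X) (hv X) Y

end SkewNijenhuisForm

theorem b3_swap (x y : Fin 6 → ℝ) : b3 y x = -b3 x y := by
  funext k
  simp only [b3, Pi.neg_apply]
  split_ifs <;> ring

theorem b3_neg_left (x y : Fin 6 → ℝ) : b3 (-x) y = -b3 x y := by
  funext k
  simp only [b3, Pi.neg_apply]
  split_ifs <;> ring

theorem b3_eq (x y : Fin 6 → ℝ) :
    b3 x y = (-ew 0 1 x y) • E 4 + (-(ew 0 4 x y + ew 2 3 x y)) • E 5 := by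
  funext k
  fin_cases k <;> simp [b3, ew, E]
  all_goals ring

theorem b3_E5_right (x : Fin 6 → ℝ) : b3 x (E 5) = 0 := by
  funext k
  fin_cases k <;> simp [b3, E]

theorem eq_smul_E5_of_b3_eq_zero {c : Fin 6 → ℝ} (h : ∀ x, b3 x c = 0) : c = c 5 • E 5 := by
  have h₁ := congrFun (h (E 0)) 4
  have h₂ := congrFun (h (E 1)) 4
  have h₃ := congrFun (h (E 0)) 5
  have h₄ := congrFun (h (E 2)) 5
  have h₅ := congrFun (h (E 3)) 5
  simp [b3, E] at h₁ h₂ h₃ h₄ h₅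
  funext i
  fin_cases i <;> simp [E, *]

section IntegrableG3

variable {J : (Fin 6 → ℝ) → (Fin 6 → ℝ)}

theorem nij_b3_E5 (hJ : IsLin J) (X : Fin 6 → ℝ) :
    nij b3 J X (E 5) = b3 (J X) (J (E 5)) - J (b3 X (J (E 5))) := by
  simp only [nij, b3_E5_right, hJ.map_zero]
  abel

theorem smul_E4_add_smul_E5_eq_zero (hJ : IsLin J) (hJJ : ∀ x, J (J x) = -x)
    (hIP : ∀ x y, ip (J x) (J y) = ip x y) (ht : ip (J (E 4)) (E 5) ^ 2 ≠ 1) {a c a' c' : ℝ}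
    (h : J (a • E 4 + c • E 5) = a' • E 4 + c' • E 5) : a • E 4 + c • E 5 = 0 := by
  set t := ip (J (E 4)) (E 5)
  have h44 : J (E 4) 4 = 0 := by rw [← ip_E (J (E 4))]; exact ip_apply_self hJJ hIP _
  have h45 : J (E 4) 5 = t := (ip_E _ _).symm
  have h54 : J (E 5) 4 = -t := by
    rw [← ip_E (J (E 5)), ip_apply_left hJJ hIP, ip_eq_dotProduct, dotProduct_comm]; rfl
  have h55 : J (E 5) 5 = 0 := by rw [← ip_E (J (E 5))]; exact ip_apply_self hJJ hIP _
  have hnorm := hIP (a • E 4 + c • E 5) (a • E 4 + c • E 5)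
  have ha' := congrFun h 4
  have hc' := congrFun h 5
  rw [h] at hnorm
  simp [hJ.map_add, hJ.map_smul, h44, h45, h54, h55, E] at ha' hc'
  simp [ip, Fin.sum_univ_six, E] at hnorm
  subst ha' hc'
  have hsum : (1 - t ^ 2) * (a ^ 2 + c ^ 2) = 0 := by linear_combination -hnorm
  have hac : a ^ 2 + c ^ 2 = 0 := (mul_eq_zero.1 hsum).resolve_left (sub_ne_zero.2 (Ne.symm ht))
  have ha : a = 0 := by nlinarith [sq_nonneg a, sq_nonneg c]
  have hc : c = 0 := by nlinarith [sq_nonneg a, sq_nonneg c]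
  simp [ha, hc]

theorem apply_E4_eq_of_sq_eq_one (hIP : ∀ x y, ip (J x) (J y) = ip x y)
    (ht : ip (J (E 4)) (E 5) ^ 2 = 1) : J (E 4) = ip (J (E 4)) (E 5) • E 5 := by
  set t := ip (J (E 4)) (E 5)
  have h5 : J (E 4) 5 = t := (ip_E _ _).symm
  have hn := hIP (E 4) (E 4)
  have hw : (J (E 4) - t • E 5) ⬝ᵥ (J (E 4) - t • E 5) = 0 := by
    simp only [ip, Fin.sum_univ_six, dotProduct] at hn ⊢
    simp [E] at hn ⊢
    rw [h5] at hn ⊢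
    linear_combination hn - ht
  exact sub_eq_zero.1 (dotProduct_self_eq_zero.1 hw)

theorem not_forall_nij_b3_eq_zero (hJ : IsLin J) (hJJ : ∀ x, J (J x) = -x)
    (hIP : ∀ x y, ip (J x) (J y) = ip x y) : ¬∀ X Y, nij b3 J X Y = 0 := by
  intro hN
  have hcomm : ∀ X, b3 (J X) (J (E 5)) = J (b3 X (J (E 5))) := fun X =>
    sub_eq_zero.1 ((nij_b3_E5 hJ X).symm.trans (hN X (E 5)))
  set t := ip (J (E 4)) (E 5)
  by_cases ht : t ^ 2 = 1
  · have h4 : J (E 4) = t • E 5 := apply_E4_eq_of_sq_eq_one hIP ht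
    have h5 : J (E 5) = (-t) • E 4 := by
      have h := hJJ (E 4)
      rw [h4, hJ.map_smul] at h
      calc J (E 5) = (t * t) • J (E 5) := by rw [← sq, ht, one_smul]
        _ = (-t) • E 4 := by rw [mul_smul, h, smul_neg, neg_smul]
    have hb : b3 (E 0) ((-t) • E 4) = t • E 5 := by
      funext k
      fin_cases k <;> simp [b3, E]
    have h := congrFun (hcomm (E 0)) 4
    rw [h5, hb, hJ.map_smul, h5] at h
    simp [b3, E] at h
    simp [h] at ht
  · have hcentral : ∀ X, b3 X (J (E 5)) = 0 := by
      intro X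
      rw [b3_eq]
      exact smul_E4_add_smul_E5_eq_zero hJ hJJ hIP ht
        ((congrArg J (b3_eq X _)).symm.trans ((hcomm X).symm.trans (b3_eq _ _)))
    have h5 := eq_smul_E5_of_b3_eq_zero hcentral
    rw [← ip_E (J (E 5)) 5, ip_apply_self hJJ hIP, zero_smul] at h5
    have h := hIP (E 5) (E 5)
    rw [h5] at h
    simp [ip, E] at h

end IntegrableG3

/-- On the 3-step algebra `𝔤₃`, no compatible almost Hermitian structure
has totally skew-symmetric Nijenhuis trilinear form (`𝒵₁₃₄ = {W₂ = 0}` is empty); in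
particular no compatible `J` is integrable: `M₃` admits no invariant Hermitian structure
compatible with the standard metric. -/
theorem stmt16 :
    (∀ J : (Fin 6 → ℝ) → (Fin 6 → ℝ), Compatible J →
      ¬(∀ X Y Z, ip (nij b3 J Y X) Z = -ip (nij b3 J X Y) Z ∧
          ip (nij b3 J X Z) Y = -ip (nij b3 J X Y) Z)) ∧
    (∀ J : (Fin 6 → ℝ) → (Fin 6 → ℝ), Compatible J → ¬(∀ X Y, nij b3 J X Y = 0)) := by
  have hb3 : ∀ x y, ∃ s t : ℝ, b3 x y = s • E 4 + t • E 5 := fun x y => ⟨_, _, b3_eq x y⟩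
  refine ⟨fun J ⟨hJ, hJJ, hIP, _⟩ hA => ?_,
    fun J ⟨hJ, hJJ, hIP, _⟩ => not_forall_nij_b3_eq_zero hJ hJJ hIP⟩
  exact not_forall_nij_b3_eq_zero hJ hJJ hIP
    (nij_eq_zero_of_skew b3_swap b3_neg_left hJ hJJ hb3 fun X Y Z => (hA X Y Z).2)
end
end

section
/- No compatible almost Hermitian structure J on 𝔤₃ has closed fundamental 2-form: there is no such J with dω = 0. Thus the class 𝒵₂ of almost Kähler (compatible symplectic) structures on the 3-step nilmanifold M₃ with its standard metric is empty. -/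
noncomputable section

/-- On the 3-step algebra `𝔤₃`, no compatible almost Hermitian structure
has closed fundamental 2-form: the class `𝒵₂` of compatible almost Kähler (symplectic)
structures is empty. -/
theorem stmt18 :
    ∀ J : (Fin 6 → ℝ) → (Fin 6 → ℝ), Compatible J →
      ¬(∀ X Y Z, dd b3 (fun X Y => ip (J X) Y) X Y Z = 0) := by
  intro J hJ hcl
  obtain ⟨⟨hadd, hsmul⟩, hJ2, hmet, _⟩ := hJ
  have hJ0 : J 0 = 0 := by
    have := hsmul 0 0
    simpa using this
  have hJneg : ∀ x, J (-x) = -J x := by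
    intro x
    have := hsmul (-1) x
    simpa using this
  have ipE : ∀ (u : Fin 6 → ℝ) (i : Fin 6), ip u (E i) = u i := by
    intro u i
    simp [ip, E]
  have ipneg : ∀ u v : Fin 6 → ℝ, ip u (-v) = -ip u v := by
    intro u v
    simp [ip, mul_neg]
  have ipnegl : ∀ u v : Fin 6 → ℝ, ip (-u) v = -ip u v := by
    intro u v
    simp [ip, neg_mul]
  have ipsymm : ∀ u v : Fin 6 → ℝ, ip u v = ip v u := by
    intro u v
    simp [ip, mul_comm]
  have skew : ∀ X Y, ip (J X) Y = -ip (J Y) X := by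
    intro X Y
    have h1 := hmet X (J Y)
    rw [hJ2 Y, ipneg] at h1
    have h2 : ip X (J Y) = ip (J Y) X := ipsymm _ _
    linarith
  have w0 : ∀ Y, ip (J 0) Y = 0 := by
    intro Y
    rw [hJ0]
    simp [ip]
  have wneg : ∀ X Y, ip (J (-X)) Y = -ip (J X) Y := by
    intro X Y
    rw [hJneg, ipnegl]
  -- bracket values
  have b023 : b3 (E 0) (E 2) = 0 := by funext k; simp [b3, E]
  have b03 : b3 (E 0) (E 3) = 0 := by funext k; simp [b3, E]
  have b12 : b3 (E 1) (E 2) = 0 := by funext k; simp [b3, E]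
  have b13 : b3 (E 1) (E 3) = 0 := by funext k; simp [b3, E]
  have b233 : b3 (E 2) (E 3) = -(E 5) := by
    funext k
    fin_cases k <;> simp [b3, E]
  have b04 : b3 (E 0) (E 4) = -(E 5) := by
    funext k
    fin_cases k <;> simp [b3, E]
  have b42 : b3 (E 4) (E 2) = 0 := by funext k; simp [b3, E]
  have b43 : b3 (E 4) (E 3) = 0 := by funext k; simp [b3, E]
  have b01 : b3 (E 0) (E 1) = -(E 4) := by
    funext k
    fin_cases k <;> simp [b3, E]
  have b05 : b3 (E 0) (E 5) = 0 := by funext k; simp [b3, E]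
  have b15 : b3 (E 1) (E 5) = 0 := by funext k; simp [b3, E]
  -- closedness equations
  have k0 : ip (J (E 5)) (E 0) = 0 := by
    have h := hcl (E 0) (E 2) (E 3)
    simp only [dd, b023, b03, b233, w0, wneg] at h
    linarith
  have k1 : ip (J (E 5)) (E 1) = 0 := by
    have h := hcl (E 1) (E 2) (E 3)
    simp only [dd, b12, b13, b233, w0, wneg] at h
    linarith
  have k2 : ip (J (E 5)) (E 2) = 0 := by
    have h := hcl (E 0) (E 4) (E 2)
    simp only [dd, b04, b023, b42, w0, wneg] at h
    linarith
  have k3 : ip (J (E 5)) (E 3) = 0 := by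
    have h := hcl (E 0) (E 4) (E 3)
    simp only [dd, b04, b03, b43, w0, wneg] at h
    linarith
  have k4 : ip (J (E 5)) (E 4) = 0 := by
    have h := hcl (E 0) (E 1) (E 5)
    simp only [dd, b01, b05, b15, w0, wneg] at h
    have h2 : ip (J (E 4)) (E 5) = 0 := by linarith
    rw [skew]
    rw [h2]
    ring
  have k5 : ip (J (E 5)) (E 5) = 0 := by
    have h := skew (E 5) (E 5)
    linarith
  have hJE5 : J (E 5) = 0 := by
    funext i
    have : ip (J (E 5)) (E i) = 0 := by fin_cases i <;> assumption
    rw [ipE] at this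
    simpa using this
  have hc := hJ2 (E 5)
  rw [hJE5, hJ0] at hc
  have := congrFun hc 5
  simp [E] at this
end
end
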